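/- arXiv:2507.12355 — 6 statements merged into one kernel-verified Lean document; each statement's English description precedes it below -/
import Mathlib

section
/- For a Euclidean triangle with vertices v1, v2, v3, edge lengths l_ij = e^{(u_i+u_j)/2} d_ij determined by fixed positive constants d_ij (satisfying triangle inequalities for the given u) and conformal factors u_1, u_2, u_3, the partial derivative of the inner angle θ_i at vertex v_i with respect to u_j (for j ≠ i) equals (1/2) cot θ_k, where k is the third vertex. -/
open Real

/-- Conformally scaled edge length: `l_{pq} = exp((u p + u q)/2) * d p q`. -/
noncomputable def clen (d : Fin 3 → Fin 3 → ℝ) (u : Fin 3 → ℝ) (p q : Fin 3) : ℝ :=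
  Real.exp ((u p + u q) / 2) * d p q

/-- Inner angle at vertex `i` of the triangle with vertices `i j k`, edge lengths given
by the conformal metric `clen d u`, via the law of cosines. -/
noncomputable def ang (d : Fin 3 → Fin 3 → ℝ) (u : Fin 3 → ℝ) (i j k : Fin 3) : ℝ :=
  Real.arccos ((clen d u i j ^ 2 + clen d u i k ^ 2 - clen d u j k ^ 2) /
    (2 * clen d u i j * clen d u i k))

noncomputable def cot (x : ℝ) : ℝ := Real.cos x / Real.sin x

set_option maxHeartbeats 1000000

theorem deriv_angle_wrt_other_vertex
    (d : Fin 3 → Fin 3 → ℝ) (hd : ∀ p q, p ≠ q → 0 < d p q)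
    (hdsymm : ∀ p q, d p q = d q p)
    (i j k : Fin 3) (hij : i ≠ j) (hik : i ≠ k) (hjk : j ≠ k)
    (u : Fin 3 → ℝ)
    (htri : clen d u i j < clen d u i k + clen d u j k ∧
            clen d u i k < clen d u i j + clen d u j k ∧
            clen d u j k < clen d u i j + clen d u i k) :
    HasDerivAt (fun t => ang d (Function.update u j t) i j k)
      ((1 / 2) * _root_.cot (ang d u k i j)) (u j) := by
  obtain ⟨ht1, ht2, ht3⟩ := htri
  set t0 := u j with ht0
  set a := clen d u j k with ha
  set b := clen d u i k with hb
  set c := clen d u i j with hc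
  have ha0 : 0 < a := mul_pos (Real.exp_pos _) (hd j k hjk)
  have hb0 : 0 < b := mul_pos (Real.exp_pos _) (hd i k hik)
  have hc0 : 0 < c := mul_pos (Real.exp_pos _) (hd i j hij)
  -- rewrite the function
  have key : (fun t => ang d (Function.update u j t) i j k) =
      (fun t => Real.arccos (((c ^ 2 - a ^ 2) * Real.exp ((t - t0) / 2) ^ 2 + b ^ 2) /
        (2 * b * c * Real.exp ((t - t0) / 2)))) := by
    funext t
    have e1 : Real.exp ((u i + t) / 2) = Real.exp ((u i + u j) / 2) * Real.exp ((t - t0) / 2) := by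
      rw [← Real.exp_add]; congr 1; rw [ht0]; ring
    have e2 : Real.exp ((t + u k) / 2) = Real.exp ((u j + u k) / 2) * Real.exp ((t - t0) / 2) := by
      rw [← Real.exp_add]; congr 1; rw [ht0]; ring
    simp only [ang, clen, Function.update_self, Function.update_of_ne hij,
      Function.update_of_ne hjk.symm, ha, hb, hc]
    rw [e1, e2]
    congr 1; ring
  rw [key]
  -- derivative of the scaling factor
  have hs : HasDerivAt (fun t : ℝ => Real.exp ((t - t0) / 2)) (1 / 2) t0 := by
    have h : HasDerivAt (fun t : ℝ => (t - t0) / 2) (1 / 2) t0 :=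
      ((hasDerivAt_id t0).sub_const t0).div_const 2
    simpa using h.exp
  have hst0 : Real.exp ((t0 - t0) / 2) = 1 := by simp
  have hnum : HasDerivAt (fun t : ℝ => (c ^ 2 - a ^ 2) * Real.exp ((t - t0) / 2) ^ 2 + b ^ 2)
      (c ^ 2 - a ^ 2) t0 := by
    have := ((hs.pow 2).const_mul (c ^ 2 - a ^ 2)).add_const (b ^ 2)
    refine this.congr_deriv ?_
    rw [hst0]; ring
  have hden : HasDerivAt (fun t : ℝ => 2 * b * c * Real.exp ((t - t0) / 2)) (b * c) t0 := by
    have := hs.const_mul (2 * b * c)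
    refine this.congr_deriv ?_; ring
  have hden0 : 2 * b * c * Real.exp ((t0 - t0) / 2) ≠ 0 := by
    rw [hst0]; positivity
  have hG := hnum.div hden hden0
  -- value of the quotient at t0
  set x : ℝ := (c ^ 2 + b ^ 2 - a ^ 2) / (2 * b * c) with hxdef
  have hGt0 : ((c ^ 2 - a ^ 2) * Real.exp ((t0 - t0) / 2) ^ 2 + b ^ 2) /
      (2 * b * c * Real.exp ((t0 - t0) / 2)) = x := by
    rw [hst0, hxdef]; ring_nf
  have hx1 : x < 1 := by
    rw [hxdef, div_lt_one (by positivity)]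
    nlinarith
  have hx2 : -1 < x := by
    rw [hxdef, lt_div_iff₀ (by positivity)]
    nlinarith
  have harccos := Real.hasDerivAt_arccos (ne_of_gt hx2) (ne_of_lt hx1)
  rw [← hGt0] at harccos
  have hcomp := harccos.comp t0 hG
  refine hcomp.congr_deriv ?_
  rw [hGt0]
  have hder : ((c ^ 2 - a ^ 2) * (2 * b * c * Real.exp ((t0 - t0) / 2)) -
        ((c ^ 2 - a ^ 2) * Real.exp ((t0 - t0) / 2) ^ 2 + b ^ 2) * (b * c)) /
      (2 * b * c * Real.exp ((t0 - t0) / 2)) ^ 2 = (c ^ 2 - a ^ 2 - b ^ 2) / (4 * b * c) := by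
    rw [hst0]; field_simp; ring
  rw [hder]
  -- now the value identity
  set Q : ℝ := (a + b + c) * (b + c - a) * (a + c - b) * (a + b - c) with hQdef
  have hQ0 : 0 < Q := by
    apply mul_pos; apply mul_pos; apply mul_pos <;> linarith
    all_goals linarith
  have hsx : Real.sqrt (1 - x ^ 2) = Real.sqrt Q / (2 * b * c) := by
    have h1 : 1 - x ^ 2 = Q / (2 * b * c) ^ 2 := by
      rw [hxdef, hQdef]; field_simp; ring
    rw [h1, Real.sqrt_div hQ0.le, Real.sqrt_sq (by positivity)]
  -- the angle at k
  have hki : clen d u k i = b := by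
    rw [hb]; simp only [clen, hdsymm k i, add_comm (u k) (u i)]
  have hkj : clen d u k j = a := by
    rw [ha]; simp only [clen, hdsymm k j, add_comm (u k) (u j)]
  set y : ℝ := (b ^ 2 + a ^ 2 - c ^ 2) / (2 * b * a) with hydef
  have hangk : ang d u k i j = Real.arccos y := by
    rw [ang, hki, hkj, hydef]
  have hy1 : y ≤ 1 := by
    rw [hydef, div_le_one (by positivity)]; nlinarith
  have hy2 : -1 ≤ y := by
    rw [hydef, le_div_iff₀ (by positivity)]; nlinarith
  have hsy : Real.sqrt (1 - y ^ 2) = Real.sqrt Q / (2 * b * a) := by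
    have h1 : 1 - y ^ 2 = Q / (2 * b * a) ^ 2 := by
      rw [hydef, hQdef]; field_simp; ring
    rw [h1, Real.sqrt_div hQ0.le, Real.sqrt_sq (by positivity)]
  have hsQ0 : Real.sqrt Q ≠ 0 := by positivity
  rw [hangk, _root_.cot, Real.cos_arccos hy2 hy1, Real.sin_arccos, hsy, hsx]
  rw [hydef]
  rw [div_div_eq_mul_div, div_div_eq_mul_div]
  field_simp
  ring
end

section
/- For a Euclidean triangle with edge lengths l_ij = e^{(u_i+u_j)/2} d_ij as functions of conformal factors u_1, u_2, u_3, the partial derivative of the inner angle θ_i with respect to u_i equals −(1/2)(cot θ_j + cot θ_k). -/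
open Real

private lemma cot_arccos {w : ℝ} (hw1 : -1 < w) (hw2 : w < 1) :
    _root_.cot (Real.arccos w) = w / Real.sqrt (1 - w ^ 2) := by
  unfold _root_.cot
  rw [Real.cos_arccos hw1.le hw2.le, Real.sin_arccos]

private lemma deriv_aux (a b c : ℝ) (ha : 0 < a) (hb : 0 < b) (hc : 0 < c)
    (h1 : a < b + c) (h2 : b < a + c) (h3 : c < a + b) (v : ℝ) :
    HasDerivAt (fun t => Real.arccos ((a ^ 2 + b ^ 2) / (2 * a * b)
        - c ^ 2 / (2 * a * b) * Real.exp (v - t)))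
      (-(1 / 2) * (_root_.cot (Real.arccos ((a ^ 2 + c ^ 2 - b ^ 2) / (2 * a * c)))
        + _root_.cot (Real.arccos ((b ^ 2 + c ^ 2 - a ^ 2) / (2 * b * c))))) v := by
  have hQ : 0 < (a + b + c) * (b + c - a) * (a + c - b) * (a + b - c) := by
    apply mul_pos (mul_pos (mul_pos (by linarith) (by linarith)) (by linarith)) (by linarith)
  set Q := (a + b + c) * (b + c - a) * (a + c - b) * (a + b - c) with hQ_def
  have hsQ : 0 < Real.sqrt Q := Real.sqrt_pos.mpr hQ
  have hx2 : 1 - ((a ^ 2 + b ^ 2 - c ^ 2) / (2 * a * b)) ^ 2 = Q / (2 * a * b) ^ 2 := by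
    rw [hQ_def]; field_simp; ring
  have hy2 : 1 - ((a ^ 2 + c ^ 2 - b ^ 2) / (2 * a * c)) ^ 2 = Q / (2 * a * c) ^ 2 := by
    rw [hQ_def]; field_simp; ring
  have hz2 : 1 - ((b ^ 2 + c ^ 2 - a ^ 2) / (2 * b * c)) ^ 2 = Q / (2 * b * c) ^ 2 := by
    rw [hQ_def]; field_simp; ring
  have hx2pos : 0 < 1 - ((a ^ 2 + b ^ 2 - c ^ 2) / (2 * a * b)) ^ 2 := by
    rw [hx2]; exact div_pos hQ (by positivity)
  have hy2pos : 0 < 1 - ((a ^ 2 + c ^ 2 - b ^ 2) / (2 * a * c)) ^ 2 := by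
    rw [hy2]; exact div_pos hQ (by positivity)
  have hz2pos : 0 < 1 - ((b ^ 2 + c ^ 2 - a ^ 2) / (2 * b * c)) ^ 2 := by
    rw [hz2]; exact div_pos hQ (by positivity)
  have hxne1 : (a ^ 2 + b ^ 2 - c ^ 2) / (2 * a * b) ≠ -1 := by
    intro h; rw [h] at hx2pos; norm_num at hx2pos
  have hxne2 : (a ^ 2 + b ^ 2 - c ^ 2) / (2 * a * b) ≠ 1 := by
    intro h; rw [h] at hx2pos; norm_num at hx2pos
  have hyne1 : -1 < (a ^ 2 + c ^ 2 - b ^ 2) / (2 * a * c) := by nlinarith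
  have hyne2 : (a ^ 2 + c ^ 2 - b ^ 2) / (2 * a * c) < 1 := by nlinarith
  have hzne1 : -1 < (b ^ 2 + c ^ 2 - a ^ 2) / (2 * b * c) := by nlinarith
  have hzne2 : (b ^ 2 + c ^ 2 - a ^ 2) / (2 * b * c) < 1 := by nlinarith
  have hsx : Real.sqrt (1 - ((a ^ 2 + b ^ 2 - c ^ 2) / (2 * a * b)) ^ 2)
      = Real.sqrt Q / (2 * a * b) := by
    rw [hx2, Real.sqrt_div hQ.le, Real.sqrt_sq (by positivity)]
  have hsy : Real.sqrt (1 - ((a ^ 2 + c ^ 2 - b ^ 2) / (2 * a * c)) ^ 2)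
      = Real.sqrt Q / (2 * a * c) := by
    rw [hy2, Real.sqrt_div hQ.le, Real.sqrt_sq (by positivity)]
  have hsz : Real.sqrt (1 - ((b ^ 2 + c ^ 2 - a ^ 2) / (2 * b * c)) ^ 2)
      = Real.sqrt Q / (2 * b * c) := by
    rw [hz2, Real.sqrt_div hQ.le, Real.sqrt_sq (by positivity)]
  have hF : HasDerivAt
      (fun t => (a ^ 2 + b ^ 2) / (2 * a * b) - c ^ 2 / (2 * a * b) * Real.exp (v - t))
      (c ^ 2 / (2 * a * b)) v := by
    have h0 : HasDerivAt (fun t : ℝ => v - t) (-1) v := (hasDerivAt_id v).const_sub v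
    have h1 := ((h0.exp).const_mul (c ^ 2 / (2 * a * b))).const_sub
      ((a ^ 2 + b ^ 2) / (2 * a * b))
    have e : c ^ 2 / (2 * a * b) = -(c ^ 2 / (2 * a * b) * (Real.exp (v - v) * -1)) := by
      rw [sub_self, Real.exp_zero]; ring
    exact h1.congr_deriv e.symm
  have hval : (a ^ 2 + b ^ 2) / (2 * a * b) - c ^ 2 / (2 * a * b) * Real.exp (v - v)
      = (a ^ 2 + b ^ 2 - c ^ 2) / (2 * a * b) := by
    rw [sub_self, Real.exp_zero, mul_one, ← sub_div]
  have hg : HasDerivAt Real.arccos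
      (-(1 / Real.sqrt (1 - ((a ^ 2 + b ^ 2 - c ^ 2) / (2 * a * b)) ^ 2)))
      ((fun t => (a ^ 2 + b ^ 2) / (2 * a * b)
        - c ^ 2 / (2 * a * b) * Real.exp (v - t)) v) := by
    rw [show ((fun t => (a ^ 2 + b ^ 2) / (2 * a * b)
        - c ^ 2 / (2 * a * b) * Real.exp (v - t)) v)
      = (a ^ 2 + b ^ 2 - c ^ 2) / (2 * a * b) from hval]
    exact Real.hasDerivAt_arccos hxne1 hxne2
  have hcomp := hg.comp v hF
  have hfinal : -(1 / 2) * (_root_.cot (Real.arccos ((a ^ 2 + c ^ 2 - b ^ 2) / (2 * a * c)))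
        + _root_.cot (Real.arccos ((b ^ 2 + c ^ 2 - a ^ 2) / (2 * b * c))))
      = -(1 / Real.sqrt (1 - ((a ^ 2 + b ^ 2 - c ^ 2) / (2 * a * b)) ^ 2))
        * (c ^ 2 / (2 * a * b)) := by
    rw [cot_arccos hyne1 hyne2, cot_arccos hzne1 hzne2, hsx, hsy, hsz]
    field_simp
    ring
  rw [hfinal]
  exact hcomp

theorem deriv_angle_wrt_same_vertex
    (d : Fin 3 → Fin 3 → ℝ) (hd : ∀ p q, p ≠ q → 0 < d p q)
    (hdsymm : ∀ p q, d p q = d q p)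
    (i j k : Fin 3) (hij : i ≠ j) (hik : i ≠ k) (hjk : j ≠ k)
    (u : Fin 3 → ℝ)
    (htri : clen d u i j < clen d u i k + clen d u j k ∧
            clen d u i k < clen d u i j + clen d u j k ∧
            clen d u j k < clen d u i j + clen d u i k) :
    HasDerivAt (fun t => ang d (Function.update u i t) i j k)
      (-(1 / 2) * (_root_.cot (ang d u j i k) + _root_.cot (ang d u k i j))) (u i) := by
  obtain ⟨h1, h2, h3⟩ := htri
  have ha : 0 < clen d u i j := mul_pos (Real.exp_pos _) (hd i j hij)
  have hb : 0 < clen d u i k := mul_pos (Real.exp_pos _) (hd i k hik)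
  have hc : 0 < clen d u j k := mul_pos (Real.exp_pos _) (hd j k hjk)
  have hfun : ∀ t, ang d (Function.update u i t) i j k =
      Real.arccos ((clen d u i j ^ 2 + clen d u i k ^ 2) / (2 * clen d u i j * clen d u i k)
        - clen d u j k ^ 2 / (2 * clen d u i j * clen d u i k) * Real.exp (u i - t)) := by
    intro t
    have hji : j ≠ i := hij.symm
    have hki : k ≠ i := hik.symm
    unfold ang clen
    rw [Function.update_self, Function.update_of_ne hji, Function.update_of_ne hki]
    congr 1
    have e2 : ∀ x y : ℝ, Real.exp ((x + y) / 2) = Real.exp (x / 2) * Real.exp (y / 2) := by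
      intro x y
      rw [← Real.exp_add]; ring_nf
    have e3 : Real.exp (u i - t) = Real.exp (u i / 2) ^ 2 * (Real.exp (t / 2) ^ 2)⁻¹ := by
      rw [← Real.exp_nat_mul, ← Real.exp_nat_mul, ← Real.exp_neg, ← Real.exp_add]
      ring_nf
    rw [e2, e2, e2, e2, e2, e3]
    have h1 := Real.exp_ne_zero (t / 2)
    have h2 := Real.exp_ne_zero (u i / 2)
    have h3 := Real.exp_ne_zero (u j / 2)
    have h4 := Real.exp_ne_zero (u k / 2)
    have h5 : d i j ≠ 0 := (hd i j hij).ne'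
    have h6 : d i k ≠ 0 := (hd i k hik).ne'
    have h7 : d j k ≠ 0 := (hd j k hjk).ne'
    field_simp
  have hang_j : ang d u j i k = Real.arccos ((clen d u i j ^ 2 + clen d u j k ^ 2
      - clen d u i k ^ 2) / (2 * clen d u i j * clen d u j k)) := by
    have e1 : clen d u j i = clen d u i j := by
      unfold clen; rw [hdsymm j i, add_comm (u j) (u i)]
    unfold ang
    rw [e1]
  have hang_k : ang d u k i j = Real.arccos ((clen d u i k ^ 2 + clen d u j k ^ 2
      - clen d u i j ^ 2) / (2 * clen d u i k * clen d u j k)) := by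
    have e1 : clen d u k i = clen d u i k := by
      unfold clen; rw [hdsymm k i, add_comm (u k) (u i)]
    have e2 : clen d u k j = clen d u j k := by
      unfold clen; rw [hdsymm k j, add_comm (u k) (u j)]
    unfold ang
    rw [e1, e2]
  rw [funext hfun, hang_j, hang_k]
  have key := deriv_aux (clen d u i j) (clen d u i k) (clen d u j k)
    ha hb hc h1 h2 h3 (u i)
  exact key
end

section
/- The symmetry ∂θ_i/∂u_j = ∂θ_j/∂u_i holds for the inner angles of a Euclidean triangle under conformal variation of edge lengths l_ij = e^{(u_i+u_j)/2} d_ij; both equal (1/2) cot θ_k. -/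
open Real

set_option maxHeartbeats 2000000 in
private lemma key
    (d : Fin 3 → Fin 3 → ℝ) (hd : ∀ p q, p ≠ q → 0 < d p q)
    (hdsymm : ∀ p q, d p q = d q p)
    (i j k : Fin 3) (hij : i ≠ j) (hik : i ≠ k) (hjk : j ≠ k)
    (u : Fin 3 → ℝ)
    (htri : clen d u i j < clen d u i k + clen d u j k ∧
            clen d u i k < clen d u i j + clen d u j k ∧
            clen d u j k < clen d u i j + clen d u i k) :
    HasDerivAt (fun t => ang d (Function.update u j t) i j k)
      ((1 / 2) * ((ang d u k i j).cos / (ang d u k i j).sin)) (u j) := by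
  set a : ℝ := clen d u j k with ha
  set b : ℝ := clen d u i k with hb
  set c : ℝ := clen d u i j with hc
  have hapos : 0 < a := mul_pos (Real.exp_pos _) (hd _ _ hjk)
  have hbpos : 0 < b := mul_pos (Real.exp_pos _) (hd _ _ hik)
  have hcpos : 0 < c := mul_pos (Real.exp_pos _) (hd _ _ hij)
  obtain ⟨t1, t2, t3⟩ := htri
  have hfun : (fun t => ang d (Function.update u j t) i j k)
      = fun t => Real.arccos (((Real.exp ((u i + t) / 2) * d i j) ^ 2 + b ^ 2
          - (Real.exp ((t + u k) / 2) * d j k) ^ 2)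
          / (2 * (Real.exp ((u i + t) / 2) * d i j) * b)) := by
    funext t
    simp only [ang, clen, Function.update_of_ne hij, Function.update_self,
      Function.update_of_ne hjk.symm, hb]
  rw [hfun]
  have h1 : HasDerivAt (fun t : ℝ => Real.exp ((u i + t) / 2))
      (Real.exp ((u i + u j) / 2) * (1 / 2)) (u j) := by
    have : HasDerivAt (fun t : ℝ => (u i + t) / 2) (1 / 2) (u j) := by
      simpa using ((hasDerivAt_id (u j)).const_add (u i)).div_const 2
    simpa using this.exp
  have h2 : HasDerivAt (fun t : ℝ => Real.exp ((t + u k) / 2))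
      (Real.exp ((u j + u k) / 2) * (1 / 2)) (u j) := by
    have : HasDerivAt (fun t : ℝ => (t + u k) / 2) (1 / 2) (u j) := by
      simpa using ((hasDerivAt_id (u j)).add_const (u k)).div_const 2
    simpa using this.exp
  have hnum : HasDerivAt (fun t : ℝ => (Real.exp ((u i + t) / 2) * d i j) ^ 2 + b ^ 2
      - (Real.exp ((t + u k) / 2) * d j k) ^ 2)
      (2 * c ^ 1 * (Real.exp ((u i + u j) / 2) * (1 / 2) * d i j)
        - 2 * a ^ 1 * (Real.exp ((u j + u k) / 2) * (1 / 2) * d j k)) (u j) := by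
    have hc2 : HasDerivAt (fun t : ℝ => (Real.exp ((u i + t) / 2) * d i j) ^ 2)
        (2 * c ^ 1 * (Real.exp ((u i + u j) / 2) * (1 / 2) * d i j)) (u j) := by
      simpa [hc, clen] using (h1.mul_const (d i j)).fun_pow 2
    have ha2 : HasDerivAt (fun t : ℝ => (Real.exp ((t + u k) / 2) * d j k) ^ 2)
        (2 * a ^ 1 * (Real.exp ((u j + u k) / 2) * (1 / 2) * d j k)) (u j) := by
      simpa [ha, clen] using (h2.mul_const (d j k)).fun_pow 2
    exact (hc2.add_const _).sub ha2
  have hden : HasDerivAt (fun t : ℝ => 2 * (Real.exp ((u i + t) / 2) * d i j) * b)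
      (2 * (Real.exp ((u i + u j) / 2) * (1 / 2) * d i j) * b) (u j) :=
    ((h1.mul_const (d i j)).const_mul 2).mul_const b
  have hdenne : (2 : ℝ) * (Real.exp ((u i + u j) / 2) * d i j) * b ≠ 0 := by
    have e1 : Real.exp ((u i + u j) / 2) * d i j = c := rfl
    rw [e1]; positivity
  have hg := hnum.div hden hdenne
  have h2cb : (0:ℝ) < 2 * c * b := by positivity
  set X : ℝ := (c ^ 2 + b ^ 2 - a ^ 2) / (2 * c * b) with hX
  have hXval : ((Real.exp ((u i + u j) / 2) * d i j) ^ 2 + b ^ 2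
      - (Real.exp ((u j + u k) / 2) * d j k) ^ 2)
      / (2 * (Real.exp ((u i + u j) / 2) * d i j) * b) = X := by
    have e1 : Real.exp ((u i + u j) / 2) * d i j = c := rfl
    have e2 : Real.exp ((u j + u k) / 2) * d j k = a := rfl
    rw [e1, e2, hX]
  have hX1 : -1 < X := by rw [hX, lt_div_iff₀ h2cb]; nlinarith
  have hX2 : X < 1 := by rw [hX, div_lt_iff₀ h2cb]; nlinarith
  have harc := Real.hasDerivAt_arccos hX1.ne' hX2.ne
  rw [← hXval] at harc
  have hfinal := harc.comp (u j) hg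
  -- now identify the angle at k
  have hki : clen d u k i = b := by
    rw [hb]; unfold clen; rw [add_comm (u k) (u i), hdsymm k i]
  have hkj : clen d u k j = a := by
    rw [ha]; unfold clen; rw [add_comm (u k) (u j), hdsymm k j]
  have h2ba : (0:ℝ) < 2 * b * a := by positivity
  set Y : ℝ := (b ^ 2 + a ^ 2 - c ^ 2) / (2 * b * a) with hY
  have hangk : ang d u k i j = Real.arccos Y := by
    rw [ang, hki, hkj, ← hc, hY]
  have hY1 : -1 < Y := by rw [hY, lt_div_iff₀ h2ba]; nlinarith
  have hY2 : Y < 1 := by rw [hY, div_lt_iff₀ h2ba]; nlinarith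
  set sX : ℝ := Real.sqrt (1 - X ^ 2) with hsX
  set sY : ℝ := Real.sqrt (1 - Y ^ 2) with hsY
  have hsXpos : 0 < sX := Real.sqrt_pos.mpr (by nlinarith)
  have hsYpos : 0 < sY := Real.sqrt_pos.mpr (by nlinarith)
  have hsX2 : sX ^ 2 = 1 - X ^ 2 := Real.sq_sqrt (by nlinarith)
  have hsY2 : sY ^ 2 = 1 - Y ^ 2 := Real.sq_sqrt (by nlinarith)
  have hkey : c * sX = a * sY := by
    have hsq : (c * sX) ^ 2 = (a * sY) ^ 2 := by
      rw [mul_pow, mul_pow, hsX2, hsY2, hX, hY]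
      field_simp
      ring
    have hprod : (c * sX - a * sY) * (c * sX + a * sY) = 0 := by ring_nf; linarith [hsq]
    rcases mul_eq_zero.mp hprod with h | h
    · linarith
    · nlinarith
  have hcos : Real.cos (ang d u k i j) = Y := by
    rw [hangk, Real.cos_arccos hY1.le hY2.le]
  have hsin : Real.sin (ang d u k i j) = sY := by
    rw [hangk, Real.sin_arccos, hsY]
  refine hfinal.congr_deriv ?_
  symm
  rw [hcos, hsin]
  have r3 : Real.exp ((u i + u j) / 2) * (1 / 2) * d i j = c * (1 / 2) := by
    rw [hc]; unfold clen; ring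
  have r4 : Real.exp ((u j + u k) / 2) * (1 / 2) * d j k = a * (1 / 2) := by
    rw [ha]; unfold clen; ring
  have r1 : Real.exp ((u i + u j) / 2) * d i j = c := rfl
  have r2 : Real.exp ((u j + u k) / 2) * d j k = a := rfl
  rw [r3, r4, r1, r2]
  rw [show √(1 - ((c ^ 2 + b ^ 2 - a ^ 2) / (2 * c * b)) ^ 2) = sX from rfl]
  have hE : -(1/sX) * (((2 * c ^ 1 * (c * (1 / 2)) - 2 * a ^ 1 * (a * (1 / 2))) * (2 * c * b) -
          (c ^ 2 + b ^ 2 - a ^ 2) * (2 * (c * (1 / 2)) * b)) /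
        (2 * c * b) ^ 2) = (a ^ 2 + b ^ 2 - c ^ 2) / (4 * (b * (c * sX))) := by
    field_simp
    ring
  rw [hE, hkey, hY]
  field_simp
  ring


theorem deriv_angle_symmetry
    (d : Fin 3 → Fin 3 → ℝ) (hd : ∀ p q, p ≠ q → 0 < d p q)
    (hdsymm : ∀ p q, d p q = d q p)
    (i j k : Fin 3) (hij : i ≠ j) (hik : i ≠ k) (hjk : j ≠ k)
    (u : Fin 3 → ℝ)
    (htri : clen d u i j < clen d u i k + clen d u j k ∧
            clen d u i k < clen d u i j + clen d u j k ∧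
            clen d u j k < clen d u i j + clen d u i k) :
    HasDerivAt (fun t => ang d (Function.update u j t) i j k)
      ((1 / 2) * _root_.cot (ang d u k i j)) (u j) ∧
    HasDerivAt (fun t => ang d (Function.update u i t) j i k)
      ((1 / 2) * _root_.cot (ang d u k i j)) (u i) := by
  have hsymm_clen : ∀ p q, clen d u p q = clen d u q p := by
    intro p q; unfold clen; rw [add_comm, hdsymm]
  have hang : ang d u k j i = ang d u k i j := by
    unfold ang
    rw [hsymm_clen j i]
    congr 1
    ring
  have htri' : clen d u j i < clen d u j k + clen d u i k ∧
      clen d u j k < clen d u j i + clen d u i k ∧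
      clen d u i k < clen d u j i + clen d u j k := by
    rw [hsymm_clen j i]
    exact ⟨by linarith [htri.1, htri.2.1, htri.2.2], by linarith [htri.2.2], by linarith [htri.2.1]⟩
  constructor
  · exact key d hd hdsymm i j k hij hik hjk u htri
  · have h := key d hd hdsymm j i k hij.symm hjk hik u htri'
    rw [hang] at h
    exact h
end

section
/- Let a Euclidean triangle have side lengths d_ij, d_ik, d_jk with all inner angles at least ε > 0, and let d̃ be side lengths with e^{−δ} d ≤ d̃ ≤ e^{δ} d componentwise. Then |cos θ_i − cos θ̃_i| ≤ 3(e^{4δ} − 1)/(2 sin²ε), where θ̃_i is computed from d̃ by the law of cosines. -/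
/-!
Write `cos θᵢ = (a/b + b/a - c²/(ab)) / 2` with `a = dᵢⱼ`, `b = dᵢₖ`, `c = dⱼₖ`. Under the
perturbation each of the three terms changes by a factor in `[e^{-4δ}, e^{4δ}]` (compare logarithms),
so `cos θᵢ` moves by at most `(e^{4δ} - 1)(a² + b² + c²)/(2ab)`. Since all angles are at least `ε`,
each of them also lies in `[ε, π - ε]`, so by the law of sines every side is at least `sin ε` times
any other side, which gives `(a² + b² + c²) sin² ε ≤ 3ab`.
-/

open Real

def IsTriangle (a b c : ℝ) : Prop := a < b + c ∧ b < a + c ∧ c < a + b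

noncomputable def cosAngle (a b c : ℝ) : ℝ := (a ^ 2 + b ^ 2 - c ^ 2) / (2 * a * b)

section cosAngle

variable {a b c : ℝ}

theorem cosAngle_comm (a b c : ℝ) : cosAngle a b c = cosAngle b a c := by
  unfold cosAngle; ring_nf

theorem cosAngle_eq (ha : a ≠ 0) (hb : b ≠ 0) :
    cosAngle a b c = (a / b + b / a - c ^ 2 / (a * b)) / 2 := by
  unfold cosAngle; field_simp

/-- The law of sines, squared. -/
theorem sq_mul_one_sub_cosAngle_sq (ha : a ≠ 0) (hb : b ≠ 0) (hc : c ≠ 0) :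
    b ^ 2 * (1 - cosAngle a b c ^ 2) = c ^ 2 * (1 - cosAngle a c b ^ 2) := by
  unfold cosAngle; field_simp; ring

theorem cosAngle_add_cosAngle_mul_cosAngle (ha : a ≠ 0) (hb : b ≠ 0) (hc : c ≠ 0) :
    cosAngle a c b + cosAngle a b c * cosAngle b c a =
      (a + b + c) * (b + c - a) * (a + c - b) * (a + b - c) / (4 * a * b ^ 2 * c) := by
  unfold cosAngle; field_simp; ring

theorem cosAngle_add_cosAngle (ha : a ≠ 0) (hb : b ≠ 0) (hc : c ≠ 0) :
    cosAngle a b c + cosAngle b c a = (a + c) * (b + c - a) * (a + b - c) / (2 * a * b * c) := by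
  unfold cosAngle; field_simp; ring

end cosAngle

namespace IsTriangle

variable {a b c : ℝ}

theorem swap (h : IsTriangle a b c) : IsTriangle b a c := by
  obtain ⟨h₁, h₂, h₃⟩ := h
  exact ⟨h₂, h₁, by linarith⟩

theorem rotate (h : IsTriangle a b c) : IsTriangle b c a := by
  obtain ⟨h₁, h₂, h₃⟩ := h
  exact ⟨by linarith, by linarith, by linarith⟩

theorem pos (h : IsTriangle a b c) : 0 < a ∧ 0 < b ∧ 0 < c := by
  obtain ⟨h₁, h₂, h₃⟩ := h
  refine ⟨?_, ?_, ?_⟩ <;> linarith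

theorem cosAngle_mem_Ioo (h : IsTriangle a b c) : cosAngle a b c ∈ Set.Ioo (-1) 1 := by
  obtain ⟨ha, hb, hc⟩ := h.pos
  obtain ⟨h₁, h₂, h₃⟩ := h
  rw [cosAngle, Set.mem_Ioo, lt_div_iff₀ (by positivity), div_lt_iff₀ (by positivity)]
  constructor
  · nlinarith [mul_pos (sub_pos.2 h₃) (add_pos (add_pos ha hb) hc)]
  · nlinarith [mul_pos (sub_pos.2 h₁) (sub_pos.2 h₂)]

theorem neg_le_cosAngle {u : ℝ} (h : IsTriangle a b c) (hu : u ≤ 1)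
    (hα : cosAngle a b c ≤ u) (hγ : cosAngle b c a ≤ u) : -u ≤ cosAngle a c b := by
  obtain ⟨ha, hb, hc⟩ := h.pos
  obtain ⟨h₁, h₂, h₃⟩ := h
  -- `cos β + cos α cos γ = sin α sin γ ≥ 0`, and `cos α + cos γ > 0` rules out two obtuse angles.
  have hsin : 0 ≤ cosAngle a c b + cosAngle a b c * cosAngle b c a := by
    rw [cosAngle_add_cosAngle_mul_cosAngle ha.ne' hb.ne' hc.ne']
    have : 0 < b + c - a := by linarith
    have : 0 < a + c - b := by linarith
    have : 0 < a + b - c := by linarith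
    positivity
  have hsum : 0 < cosAngle a b c + cosAngle b c a := by
    rw [cosAngle_add_cosAngle ha.ne' hb.ne' hc.ne']
    have : 0 < b + c - a := by linarith
    have : 0 < a + b - c := by linarith
    positivity
  have hprod : cosAngle a b c * cosAngle b c a ≤ u := by
    rcases le_or_gt 0 (cosAngle a b c) with h0 | h0 <;> nlinarith
  linarith

end IsTriangle

theorem sin_mul_le_of_abs_cosAngle_le {x y z ε : ℝ} (hx : x ≠ 0) (hy : 0 < y) (hz : z ≠ 0)
    (h : |cosAngle x z y| ≤ cos ε) : sin ε * z ≤ y := by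
  have hcos : cosAngle x z y ^ 2 ≤ cos ε ^ 2 := by
    simpa only [sq_abs] using pow_le_pow_left₀ (abs_nonneg _) h 2
  refine le_of_sq_le_sq ?_ hy.le
  calc (sin ε * z) ^ 2 = z ^ 2 * (1 - cos ε ^ 2) := by rw [mul_pow, sin_sq]; ring
    _ ≤ z ^ 2 * (1 - cosAngle x z y ^ 2) := by gcongr
    _ = y ^ 2 * (1 - cosAngle x y z ^ 2) := (sq_mul_one_sub_cosAngle_sq hx hy.ne' hz).symm
    _ ≤ y ^ 2 := by nlinarith [sq_nonneg (y * cosAngle x y z)]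

theorem IsTriangle.sum_sq_mul_sin_sq_le {a b c ε : ℝ} (h : IsTriangle a b c) (hs : 0 ≤ sin ε)
    (hα : cosAngle a b c ≤ cos ε) (hβ : cosAngle a c b ≤ cos ε) (hγ : cosAngle b c a ≤ cos ε) :
    (a ^ 2 + b ^ 2 + c ^ 2) * sin ε ^ 2 ≤ 3 * (a * b) := by
  obtain ⟨ha, hb, hc⟩ := h.pos
  have hβ' : |cosAngle a c b| ≤ cos ε := abs_le.2 ⟨h.neg_le_cosAngle (cos_le_one ε) hα hγ, hβ⟩
  have hγ' : |cosAngle b c a| ≤ cos ε :=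
    abs_le.2 ⟨h.swap.neg_le_cosAngle (cos_le_one ε) (by rwa [cosAngle_comm]) hβ, hγ⟩
  have hcb := sin_mul_le_of_abs_cosAngle_le ha.ne' hb hc.ne' hβ'
  have hca := sin_mul_le_of_abs_cosAngle_le hb.ne' ha hc.ne' hγ'
  have hab := sin_mul_le_of_abs_cosAngle_le hc.ne' hb ha.ne' (by rwa [cosAngle_comm])
  have hba := sin_mul_le_of_abs_cosAngle_le hc.ne' ha hb.ne' (by rwa [cosAngle_comm])
  have hsq : ∀ z, 0 ≤ z → sin ε * z ≤ a → sin ε * z ≤ b → (sin ε * z) ^ 2 ≤ a * b :=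
    fun z hz hza hzb => pow_two (sin ε * z) ▸ mul_le_mul hza hzb (by positivity) ha.le
  have hss : sin ε * a ≤ a := mul_le_of_le_one_left ha.le (sin_le_one ε)
  have hsb : sin ε * b ≤ b := mul_le_of_le_one_left hb.le (sin_le_one ε)
  calc (a ^ 2 + b ^ 2 + c ^ 2) * sin ε ^ 2
      = (sin ε * a) ^ 2 + (sin ε * b) ^ 2 + (sin ε * c) ^ 2 := by ring
    _ ≤ 3 * (a * b) := by
      linarith [hsq a ha.le hss hab, hsq b hb.le hba hsb, hsq c hc.le hca hcb]

theorem abs_exp_sub_one_le_exp_abs_sub_one (t : ℝ) : |exp t - 1| ≤ exp |t| - 1 := by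
  rcases le_or_gt 0 t with ht | ht
  · rw [abs_of_nonneg ht, abs_of_nonneg (by linarith [add_one_le_exp t])]
  · rw [abs_of_neg ht, abs_of_neg (by linarith [exp_lt_one_iff.2 ht])]
    linarith [add_one_le_exp t, add_one_le_exp (-t)]

theorem abs_sub_le_of_abs_log_sub_log_le {x y η : ℝ} (hx : 0 < x) (hy : 0 < y)
    (h : |log y - log x| ≤ η) : |y - x| ≤ (exp η - 1) * x := by
  have hy' : y = x * exp (log y - log x) := by rw [exp_sub, exp_log hx, exp_log hy]; field_simp
  calc |y - x| = |x * (exp (log y - log x) - 1)| := by rw [mul_sub_one, ← hy']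
    _ = |exp (log y - log x) - 1| * x := by rw [abs_mul, abs_of_pos hx, mul_comm]
    _ ≤ (exp η - 1) * x := by
        gcongr
        exact (abs_exp_sub_one_le_exp_abs_sub_one _).trans (by gcongr)

theorem abs_log_sub_log_le {x y δ : ℝ} (hx : 0 < x) (h : exp (-δ) * x ≤ y ∧ y ≤ exp δ * x) :
    |log y - log x| ≤ δ := by
  have hy : 0 < y := lt_of_lt_of_le (by positivity) h.1
  have h₁ := log_le_log (by positivity) h.1
  have h₂ := log_le_log hy h.2
  rw [log_mul (exp_pos _).ne' hx.ne', log_exp] at h₁ h₂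
  rw [abs_le]; constructor <;> linarith

theorem abs_cosAngle_sub_cosAngle_le {a b c a' b' c' δ : ℝ}
    (ha : 0 < a) (hb : 0 < b) (hc : 0 < c) (ha' : 0 < a') (hb' : 0 < b') (hc' : 0 < c')
    (hda : |log a' - log a| ≤ δ) (hdb : |log b' - log b| ≤ δ)
    (hdc : |log c' - log c| ≤ δ) :
    |cosAngle a' b' c' - cosAngle a b c| ≤
      (exp (4 * δ) - 1) * ((a ^ 2 + b ^ 2 + c ^ 2) / (2 * a * b)) := by
  have hratio : ∀ {x y x' y' : ℝ}, 0 < x → 0 < y → 0 < x' → 0 < y' →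
      |log x' - log x| ≤ δ → |log y' - log y| ≤ δ →
      |x' / y' - x / y| ≤ (exp (4 * δ) - 1) * (x / y) := by
    intro x y x' y' hx hy hx' hy' hdx hdy
    rw [abs_le] at hdx hdy
    refine abs_sub_le_of_abs_log_sub_log_le (by positivity) (by positivity) ?_
    rw [log_div hx'.ne' hy'.ne', log_div hx.ne' hy.ne', abs_le]
    constructor <;> linarith
  have hab := hratio ha hb ha' hb' hda hdb
  have hba := hratio hb ha hb' ha' hdb hda
  rw [abs_le] at hda hdb hdc
  have hcc : |c' ^ 2 / (a' * b') - c ^ 2 / (a * b)| ≤ (exp (4 * δ) - 1) * (c ^ 2 / (a * b)) := by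
    refine abs_sub_le_of_abs_log_sub_log_le (by positivity) (by positivity) ?_
    rw [log_div (by positivity) (by positivity), log_div (by positivity) (by positivity),
      log_mul ha'.ne' hb'.ne', log_mul ha.ne' hb.ne', log_pow, log_pow, abs_le]
    push_cast
    constructor <;> linarith
  have hsum : (a ^ 2 + b ^ 2 + c ^ 2) / (2 * a * b) = (a / b + b / a + c ^ 2 / (a * b)) / 2 := by
    field_simp
  rw [abs_le] at hab hba hcc
  rw [cosAngle_eq ha.ne' hb.ne', cosAngle_eq ha'.ne' hb'.ne', hsum, abs_le]
  constructor <;> linarith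

theorem cos_angle_perturbation_bound_general
    (ε δ : ℝ) (hε : 0 < ε) (hδ : 0 ≤ δ)
    (dij dik djk : ℝ)
    (htri : dij < dik + djk ∧ dik < dij + djk ∧ djk < dij + dik)
    (hangi : ε ≤ Real.arccos ((dij ^ 2 + dik ^ 2 - djk ^ 2) / (2 * dij * dik)))
    (hangj : ε ≤ Real.arccos ((dij ^ 2 + djk ^ 2 - dik ^ 2) / (2 * dij * djk)))
    (hangk : ε ≤ Real.arccos ((dik ^ 2 + djk ^ 2 - dij ^ 2) / (2 * dik * djk)))
    (tij tik tjk : ℝ)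
    (hij : Real.exp (-δ) * dij ≤ tij ∧ tij ≤ Real.exp δ * dij)
    (hik : Real.exp (-δ) * dik ≤ tik ∧ tik ≤ Real.exp δ * dik)
    (hjk : Real.exp (-δ) * djk ≤ tjk ∧ tjk ≤ Real.exp δ * djk)
    (htri' : tij < tik + tjk ∧ tik < tij + tjk ∧ tjk < tij + tik) :
    |Real.cos (Real.arccos ((dij ^ 2 + dik ^ 2 - djk ^ 2) / (2 * dij * dik))) -
      Real.cos (Real.arccos ((tij ^ 2 + tik ^ 2 - tjk ^ 2) / (2 * tij * tik)))| ≤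
    3 * (Real.exp (4 * δ) - 1) / (2 * Real.sin ε ^ 2) := by
  have hd : IsTriangle dij dik djk := htri
  have ht : IsTriangle tij tik tjk := htri'
  obtain ⟨hdij, hdik, hdjk⟩ := hd.pos
  obtain ⟨htij, htik, htjk⟩ := ht.pos
  have le_cos : ∀ x ∈ Set.Ioo (-1 : ℝ) 1, ε ≤ arccos x → x ≤ cos ε := fun x hx h =>
    cos_arccos hx.1.le hx.2.le ▸ cos_le_cos_of_nonneg_of_le_pi hε.le (arccos_le_pi x) h
  have hsin : 0 < sin ε :=
    sin_pos_of_pos_of_lt_pi hε (hangi.trans_lt (arccos_lt_pi.2 hd.cosAngle_mem_Ioo.1))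
  have hgeom := hd.sum_sq_mul_sin_sq_le hsin.le (le_cos _ hd.cosAngle_mem_Ioo hangi)
    (le_cos _ hd.swap.rotate.cosAngle_mem_Ioo hangj) (le_cos _ hd.rotate.cosAngle_mem_Ioo hangk)
  have hE : 0 ≤ exp (4 * δ) - 1 := by linarith [one_le_exp (by linarith : 0 ≤ 4 * δ)]
  show |cos (arccos (cosAngle dij dik djk)) - cos (arccos (cosAngle tij tik tjk))| ≤ _
  rw [cos_arccos hd.cosAngle_mem_Ioo.1.le hd.cosAngle_mem_Ioo.2.le,
    cos_arccos ht.cosAngle_mem_Ioo.1.le ht.cosAngle_mem_Ioo.2.le, abs_sub_comm]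
  calc |cosAngle tij tik tjk - cosAngle dij dik djk|
      ≤ (exp (4 * δ) - 1) * ((dij ^ 2 + dik ^ 2 + djk ^ 2) / (2 * dij * dik)) :=
        abs_cosAngle_sub_cosAngle_le hdij hdik hdjk htij htik htjk
          (abs_log_sub_log_le hdij hij) (abs_log_sub_log_le hdik hik) (abs_log_sub_log_le hdjk hjk)
    _ ≤ 3 * (exp (4 * δ) - 1) / (2 * sin ε ^ 2) := by
        rw [← mul_div_assoc, div_le_div_iff₀ (by positivity) (by positivity)]
        nlinarith [mul_le_mul_of_nonneg_left hgeom hE]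

theorem cos_angle_perturbation_bound
    (ε δ : ℝ) (hε : 0 < ε) (hδ : 0 ≤ δ)
    (dij dik djk : ℝ) (hdij : 0 < dij) (hdik : 0 < dik) (hdjk : 0 < djk)
    (htri : dij < dik + djk ∧ dik < dij + djk ∧ djk < dij + dik)
    (hangi : ε ≤ Real.arccos ((dij ^ 2 + dik ^ 2 - djk ^ 2) / (2 * dij * dik)))
    (hangj : ε ≤ Real.arccos ((dij ^ 2 + djk ^ 2 - dik ^ 2) / (2 * dij * djk)))
    (hangk : ε ≤ Real.arccos ((dik ^ 2 + djk ^ 2 - dij ^ 2) / (2 * dik * djk)))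
    (tij tik tjk : ℝ)
    (hij : Real.exp (-δ) * dij ≤ tij ∧ tij ≤ Real.exp δ * dij)
    (hik : Real.exp (-δ) * dik ≤ tik ∧ tik ≤ Real.exp δ * dik)
    (hjk : Real.exp (-δ) * djk ≤ tjk ∧ tjk ≤ Real.exp δ * djk)
    (htri' : tij < tik + tjk ∧ tik < tij + tjk ∧ tjk < tij + tik) :
    |Real.cos (Real.arccos ((dij ^ 2 + dik ^ 2 - djk ^ 2) / (2 * dij * dik))) -
      Real.cos (Real.arccos ((tij ^ 2 + tik ^ 2 - tjk ^ 2) / (2 * tij * tik)))| ≤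
    3 * (Real.exp (4 * δ) - 1) / (2 * Real.sin ε ^ 2) :=
  cos_angle_perturbation_bound_general ε δ hε hδ dij dik djk htri hangi hangj hangk tij tik tjk hij
    hik hjk htri'
end

section
/- Discrete maximum principle: Let G = (V,E) be a (possibly infinite) graph with time-dependent nonnegative edge weights ω(t) on [0,T] satisfying Σ_{j∼i} ω_ij(t) ≤ C for all i and t. If f : V × [0,T] → ℝ is bounded, differentiable in t, satisfies df_i/dt ≤ Σ_{j∼i} ω_ij(t)(f_j − f_i) for all i and t, f(·,0) ≤ 0, and V admits a vertex v_0 such that f(v_i,t) − δ·dist(v_0,v_i) → −∞ along any sequence with dist → ∞, then f ≤ 0 on V × [0,T]. -/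
open Set

/-- Balls in a locally finite connected graph are finite. -/
lemma ball_finite' {V : Type*} (G : SimpleGraph V) [∀ v, Fintype (G.neighborSet v)]
    (v0 : V) (n : ℕ) : {v : V | ∃ w : G.Walk v v0, w.length ≤ n}.Finite := by
  induction n with
  | zero =>
    apply Set.Finite.subset (Set.finite_singleton v0)
    rintro v ⟨w, hw⟩
    exact SimpleGraph.Walk.eq_of_length_eq_zero (Nat.le_zero.mp hw)
  | succ n ih =>
    apply Set.Finite.subset
      (ih.union (ih.biUnion fun u _ => (G.neighborSet u).toFinite))
    rintro v ⟨w, hw⟩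
    cases w with
    | nil => exact Or.inl ⟨SimpleGraph.Walk.nil, Nat.zero_le _⟩
    | cons h q =>
      refine Or.inr (Set.mem_biUnion ⟨q, ?_⟩ h.symm)
      simpa [SimpleGraph.Walk.length_cons] using hw

lemma ball_finite {V : Type*} (G : SimpleGraph V) [∀ v, Fintype (G.neighborSet v)]
    (hconn : G.Connected) (v0 : V) (n : ℕ) : {v : V | G.dist v0 v ≤ n}.Finite := by
  apply (ball_finite' G v0 n).subset
  intro v hv
  obtain ⟨w, hw⟩ := (hconn v0 v).exists_walk_length_eq_dist
  exact ⟨w.reverse, by rw [SimpleGraph.Walk.length_reverse, hw]; exact hv⟩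

/-- If a differentiable function on `[0, T]` attains its maximum at `t0 > 0`,
then its derivative at `t0` is nonnegative. -/
lemma deriv_nonneg_of_isMaxOn {g : ℝ → ℝ} {g' t0 T : ℝ} (hT : 0 ≤ T)
    (ht0 : 0 < t0) (hmem : t0 ∈ Set.Icc 0 T)
    (hd : HasDerivAt g g' t0) (hmax : IsMaxOn g (Set.Icc 0 T) t0) : 0 ≤ g' := by
  have hy : (0 : ℝ) - t0 ∈ posTangentConeAt (Set.Icc 0 T) t0 :=
    sub_mem_posTangentConeAt_of_segment_subset
      ((convex_Icc (0:ℝ) T).segment_subset hmem ⟨le_refl 0, hT⟩)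
  have hloc : IsLocalMaxOn g (Set.Icc 0 T) t0 :=
    hmax.filter_mono (inf_le_right)
  have h := hloc.hasFDerivWithinAt_nonpos
    hd.hasDerivWithinAt.hasFDerivWithinAt hy
  simp only [ContinuousLinearMap.smulRight_apply, ContinuousLinearMap.one_apply,
    smul_eq_mul, zero_sub, neg_mul, ContinuousLinearMap.toSpanSingleton_apply] at h
  nlinarith

/-- Discrete maximum principle for the weighted-graph heat inequality on a
locally finite connected graph. -/
theorem discrete_maximum_principle
    (V : Type*) (G : SimpleGraph V) [∀ v, Fintype (G.neighborSet v)]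
    (hconn : G.Connected)
    (T C : ℝ) (hT : 0 ≤ T)
    (ω : ℝ → V → V → ℝ)
    (hω : ∀ t ∈ Set.Icc 0 T, ∀ i j, 0 ≤ ω t i j)
    (hωsum : ∀ t ∈ Set.Icc 0 T, ∀ i, ∑ j ∈ G.neighborFinset i, ω t i j ≤ C)
    (f : V → ℝ → ℝ) (f' : V → ℝ → ℝ)
    (hbdd : ∃ B, ∀ i, ∀ t ∈ Set.Icc 0 T, |f i t| ≤ B)
    (hderiv : ∀ i, ∀ t ∈ Set.Icc 0 T, HasDerivAt (f i) (f' i t) t)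
    (hineq : ∀ i, ∀ t ∈ Set.Icc 0 T,
      f' i t ≤ ∑ j ∈ G.neighborFinset i, ω t i j * (f j t - f i t))
    (hinit : ∀ i, f i 0 ≤ 0)
    (hdecay : ∃ v0 : V, ∀ δ > (0 : ℝ), ∀ A : ℝ, ∃ N : ℕ, ∀ i : V, N ≤ G.dist v0 i →
      ∀ t ∈ Set.Icc 0 T, f i t - δ * (G.dist v0 i : ℝ) ≤ A) :
    ∀ i, ∀ t ∈ Set.Icc 0 T, f i t ≤ 0 := by
  classical
  obtain ⟨v0, hv0⟩ := hdecay
  intro i1 t1 ht1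
  -- It suffices to show the bound with an arbitrary ε > 0.
  set K : ℝ := (G.dist v0 i1 : ℝ) / (2 * (|C| + 1)) + t1 with hK
  have hKnonneg : 0 ≤ K := by
    have : (0:ℝ) ≤ (G.dist v0 i1 : ℝ) / (2 * (|C| + 1)) :=
      div_nonneg (Nat.cast_nonneg _) (by positivity)
    have := ht1.1
    simp only [hK]; linarith
  suffices hsuff : ∀ ε > (0:ℝ), f i1 t1 ≤ ε * K by
    by_contra hf
    push_neg at hf
    have hε : 0 < f i1 t1 / (2 * (K + 1)) := by positivity
    have h := hsuff _ hε
    rw [div_mul_eq_mul_div, le_div_iff₀ (by positivity)] at h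
    nlinarith
  intro ε hε
  set δ : ℝ := ε / (2 * (|C| + 1)) with hδ
  have hδpos : 0 < δ := by positivity
  -- the penalized function
  set u : V → ℝ → ℝ := fun i t => f i t - δ * (G.dist v0 i : ℝ) - ε * t with hu
  -- suffices to show u i1 t1 ≤ 0
  suffices husuff : u i1 t1 ≤ 0 by
    have : f i1 t1 ≤ δ * (G.dist v0 i1 : ℝ) + ε * t1 := by
      simp only [hu] at husuff; linarith
    calc f i1 t1 ≤ δ * (G.dist v0 i1 : ℝ) + ε * t1 := this
      _ = ε * K := by simp only [hδ, hK]; ring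
  by_contra hcon
  push_neg at hcon
  -- outside a big ball, u ≤ 0
  obtain ⟨N, hN⟩ := hv0 δ hδpos 0
  have houtside : ∀ i : V, ¬ (G.dist v0 i ≤ N) → ∀ t ∈ Set.Icc 0 T, u i t ≤ 0 := by
    intro i hi t ht
    have h1 := hN i (le_of_not_ge hi) t ht
    have h2 : 0 ≤ ε * t := mul_nonneg hε.le ht.1
    simp only [hu]; linarith
  -- the ball as a finset
  have hball : {v : V | G.dist v0 v ≤ N}.Finite := ball_finite G hconn v0 N
  set s : Finset V := hball.toFinset with hs
  have hmem_s : ∀ v, v ∈ s ↔ G.dist v0 v ≤ N := fun v => hball.mem_toFinset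
  have hi1s : i1 ∈ s := by
    rw [hmem_s]
    by_contra hi1
    exact absurd (houtside i1 hi1 t1 ht1) (not_le.mpr hcon)
  -- continuity of u i on [0,T]
  have hcont : ∀ i : V, ContinuousOn (u i) (Set.Icc 0 T) := by
    intro i
    have hf : ContinuousOn (f i) (Set.Icc 0 T) := fun t ht =>
      ((hderiv i t ht).continuousAt).continuousWithinAt
    exact (hf.sub continuousOn_const).sub (continuousOn_const.mul continuousOn_id)
  -- maximizer time for each vertex in the ball
  have hmaxt : ∀ i : V, ∃ t ∈ Set.Icc 0 T, IsMaxOn (u i) (Set.Icc 0 T) t := by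
    intro i
    exact isCompact_Icc.exists_isMaxOn (Set.nonempty_Icc.mpr hT) (hcont i)
  choose tm htm_mem htm_max using hmaxt
  -- pick the maximizing vertex in the ball
  obtain ⟨i0, hi0s, hi0max⟩ := s.exists_max_image (fun i => u i (tm i)) ⟨i1, hi1s⟩
  set t0 : ℝ := tm i0 with ht0def
  set M : ℝ := u i0 t0 with hM
  have ht0mem : t0 ∈ Set.Icc 0 T := htm_mem i0
  have hMpos : 0 < M := by
    calc (0:ℝ) < u i1 t1 := hcon
      _ ≤ u i1 (tm i1) := htm_max i1 ht1
      _ ≤ M := hi0max i1 hi1s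
  -- M dominates u j t0 for every j
  have hMdom : ∀ j : V, u j t0 ≤ M := by
    intro j
    by_cases hjs : j ∈ s
    · calc u j t0 ≤ u j (tm j) := htm_max j ht0mem
        _ ≤ M := hi0max j hjs
    · exact le_trans (houtside j (fun h => hjs ((hmem_s j).mpr h)) t0 ht0mem) hMpos.le
  -- t0 > 0
  have ht0pos : 0 < t0 := by
    rcases lt_or_eq_of_le ht0mem.1 with h | h
    · exact h
    · exfalso
      have h0 : u i0 0 ≤ 0 := by
        have := hinit i0
        have hd : 0 ≤ δ * (G.dist v0 i0 : ℝ) := mul_nonneg hδpos.le (Nat.cast_nonneg _)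
        simp only [hu]; linarith
      rw [hM, ← h] at hMpos
      linarith
  -- derivative of u i0 at t0
  have hud : HasDerivAt (u i0) (f' i0 t0 - ε) t0 := by
    have h1 : HasDerivAt (fun t => f i0 t - δ * (G.dist v0 i0 : ℝ)) (f' i0 t0) t0 :=
      (hderiv i0 t0 ht0mem).sub_const _
    have h2 : HasDerivAt (fun t : ℝ => ε * t) ε t0 := by
      simpa using (hasDerivAt_id t0).const_mul ε
    exact h1.sub h2
  -- derivative nonneg at the max
  have hderivpos : ε ≤ f' i0 t0 := by
    have := deriv_nonneg_of_isMaxOn hT ht0pos ht0mem hud (htm_max i0)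
    linarith
  -- but the heat inequality bounds f' i0 t0 by C * δ
  have hsumbound : f' i0 t0 ≤ C * δ := by
    have h1 := hineq i0 t0 ht0mem
    have h2 : ∀ j ∈ G.neighborFinset i0, ω t0 i0 j * (f j t0 - f i0 t0) ≤ ω t0 i0 j * δ := by
      intro j hj
      have hadj : G.Adj i0 j := (SimpleGraph.mem_neighborFinset G i0 j).mp hj
      have hdist : (G.dist v0 j : ℝ) ≤ (G.dist v0 i0 : ℝ) + 1 := by
        have htri := hconn.dist_triangle (u := v0) (v := i0) (w := j)
        have hone : G.dist i0 j = 1 := SimpleGraph.dist_eq_one_iff_adj.mpr hadj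
        rw [hone] at htri
        exact_mod_cast htri
      have hfj : f j t0 - f i0 t0 ≤ δ := by
        have huj : u j t0 ≤ u i0 t0 := hMdom j
        simp only [hu] at huj
        nlinarith
      exact mul_le_mul_of_nonneg_left hfj (hω t0 ht0mem i0 j)
    calc f' i0 t0 ≤ ∑ j ∈ G.neighborFinset i0, ω t0 i0 j * (f j t0 - f i0 t0) := h1
      _ ≤ ∑ j ∈ G.neighborFinset i0, ω t0 i0 j * δ := Finset.sum_le_sum h2
      _ = (∑ j ∈ G.neighborFinset i0, ω t0 i0 j) * δ := by rw [Finset.sum_mul]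
      _ ≤ C * δ := mul_le_mul_of_nonneg_right (hωsum t0 ht0mem i0) hδpos.le
  -- contradiction: ε ≤ C * δ = C * ε / (2 (|C|+1)) < ε
  have hCabs : C ≤ |C| := le_abs_self C
  have habs : 0 ≤ |C| := abs_nonneg C
  have hCδ : C * δ < ε := by
    have : C * δ ≤ |C| * δ := mul_le_mul_of_nonneg_right hCabs hδpos.le
    have h2 : |C| * δ < ε := by
      rw [hδ, mul_div_assoc']
      rw [div_lt_iff₀ (by positivity)]
      nlinarith
    linarith
  linarith
end

section
/- Discrete uniqueness from the maximum principle: under the hypotheses of the weighted-graph heat equation, if f : V × [0,T] → ℝ is bounded, solves df/dt = Δ_{ω(t)} f with f(·,0) = 0, the weights are nonnegative with Σ_{j∼i} ω_ij(t) ≤ C, then f ≡ 0 on V × [0,T]. -/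
private lemma mono_aux {T : ℝ} {h h' : ℝ → ℝ}
    (hd : ∀ s ∈ Set.Icc 0 T, HasDerivAt h (h' s) s)
    (hpos : ∀ s ∈ Set.Icc 0 T, 0 ≤ h' s) : MonotoneOn h (Set.Icc 0 T) := by
  apply monotoneOn_of_hasDerivWithinAt_nonneg (f' := h') (convex_Icc 0 T)
  · exact fun s hs => (hd s hs).continuousAt.continuousWithinAt
  · intro s hs
    exact (hd s (interior_subset hs)).hasDerivWithinAt
  · intro s hs
    exact hpos s (interior_subset hs)

/-- Uniqueness for the weighted-graph heat equation on an infinite locally finite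
connected graph: a bounded solution with zero initial data vanishes identically. -/
theorem discrete_heat_equation_uniqueness
    (V : Type*) [Infinite V] (G : SimpleGraph V) [∀ v, Fintype (G.neighborSet v)]
    (hconn : G.Connected)
    (T C : ℝ) (hT : 0 ≤ T)
    (ω : ℝ → V → V → ℝ)
    (hω : ∀ t ∈ Set.Icc 0 T, ∀ i j, 0 ≤ ω t i j)
    (hωcont : ∀ i j, ContinuousOn (fun t => ω t i j) (Set.Icc 0 T))
    (hωsum : ∀ t ∈ Set.Icc 0 T, ∀ i, ∑ j ∈ G.neighborFinset i, ω t i j ≤ C)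
    (f : V → ℝ → ℝ) (f' : V → ℝ → ℝ)
    (hbdd : ∃ B, ∀ i, ∀ t ∈ Set.Icc 0 T, |f i t| ≤ B)
    (hderiv : ∀ i, ∀ t ∈ Set.Icc 0 T, HasDerivAt (f i) (f' i t) t)
    (heq : ∀ i, ∀ t ∈ Set.Icc 0 T,
      f' i t = ∑ j ∈ G.neighborFinset i, ω t i j * (f j t - f i t))
    (hinit : ∀ i, f i 0 = 0) :
    ∀ i, ∀ t ∈ Set.Icc 0 T, f i t = 0 := by
  obtain ⟨B, hB⟩ := hbdd
  obtain ⟨i₀⟩ : Nonempty V := inferInstance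
  have h0T : (0:ℝ) ∈ Set.Icc 0 T := ⟨le_refl 0, hT⟩
  -- C is nonnegative
  have hC : 0 ≤ C :=
    le_trans (Finset.sum_nonneg fun j _ => hω 0 h0T i₀ j) (hωsum 0 h0T i₀)
  set L : ℝ := 2 * C + 1 with hL
  have hLpos : 0 < L := by positivity
  -- the set of weighted values
  set A : Set ℝ := {x | ∃ i, ∃ t ∈ Set.Icc 0 T, x = |f i t| * Real.exp (-L * t)} with hA
  have hAne : A.Nonempty := ⟨|f i₀ 0| * Real.exp (-L * 0), i₀, 0, h0T, rfl⟩
  have hBnn : 0 ≤ B := le_trans (abs_nonneg _) (hB i₀ 0 h0T)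
  have hAbdd : BddAbove A := by
    refine ⟨B, fun x hx => ?_⟩
    obtain ⟨i, t, ht, rfl⟩ := hx
    have h1 : Real.exp (-L * t) ≤ 1 := by
      apply Real.exp_le_one_iff.mpr
      nlinarith [ht.1, hLpos]
    calc |f i t| * Real.exp (-L * t) ≤ B * 1 :=
          mul_le_mul (hB i t ht) h1 (Real.exp_nonneg _) hBnn
      _ = B := mul_one B
  set S : ℝ := sSup A with hS
  have hSnn : 0 ≤ S := by
    have : |f i₀ 0| * Real.exp (-L * 0) ∈ A := ⟨i₀, 0, h0T, rfl⟩
    have := le_csSup hAbdd this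
    simp [hinit] at this
    linarith
  have hfS : ∀ i, ∀ t ∈ Set.Icc 0 T, |f i t| ≤ S * Real.exp (L * t) := by
    intro i t ht
    have hmem : |f i t| * Real.exp (-L * t) ∈ A := ⟨i, t, ht, rfl⟩
    have h1 := le_csSup hAbdd hmem
    have h2 : 0 < Real.exp (-L * t) := Real.exp_pos _
    have h3 : |f i t| = |f i t| * Real.exp (-L * t) * Real.exp (L * t) := by
      rw [mul_assoc, ← Real.exp_add, show -L * t + L * t = 0 by ring, Real.exp_zero, mul_one]
    rw [h3]
    exact mul_le_mul_of_nonneg_right h1 (Real.exp_pos _).le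
  -- bound on the derivative
  have hf'bound : ∀ i, ∀ s ∈ Set.Icc 0 T, |f' i s| ≤ 2 * C * S * Real.exp (L * s) := by
    intro i s hs
    rw [heq i s hs]
    calc |∑ j ∈ G.neighborFinset i, ω s i j * (f j s - f i s)|
        ≤ ∑ j ∈ G.neighborFinset i, |ω s i j * (f j s - f i s)| :=
          Finset.abs_sum_le_sum_abs _ _
      _ ≤ ∑ j ∈ G.neighborFinset i, ω s i j * (2 * S * Real.exp (L * s)) := by
          apply Finset.sum_le_sum
          intro j _
          rw [abs_mul, abs_of_nonneg (hω s hs i j)]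
          apply mul_le_mul_of_nonneg_left _ (hω s hs i j)
          calc |f j s - f i s| ≤ |f j s| + |f i s| := abs_sub _ _
            _ ≤ S * Real.exp (L * s) + S * Real.exp (L * s) :=
                add_le_add (hfS j s hs) (hfS i s hs)
            _ = 2 * S * Real.exp (L * s) := by ring
      _ = (∑ j ∈ G.neighborFinset i, ω s i j) * (2 * S * Real.exp (L * s)) := by
          rw [Finset.sum_mul]
      _ ≤ C * (2 * S * Real.exp (L * s)) := by
          apply mul_le_mul_of_nonneg_right (hωsum s hs i)
          positivity
      _ = 2 * C * S * Real.exp (L * s) := by ring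
  -- the comparison function
  set φ : ℝ → ℝ := fun s => (2 * C * S / L) * (Real.exp (L * s) - 1) with hφ
  have hφderiv : ∀ s, HasDerivAt φ (2 * C * S * Real.exp (L * s)) s := by
    intro s
    have h1 : HasDerivAt (fun s : ℝ => L * s) L s := by
      simpa using (hasDerivAt_id s).const_mul L
    have h2 : HasDerivAt (fun s : ℝ => Real.exp (L * s)) (Real.exp (L * s) * L) s := h1.exp
    have h3 : HasDerivAt (fun s : ℝ => Real.exp (L * s) - 1) (Real.exp (L * s) * L) s :=
      h2.sub_const 1
    have h4 := h3.const_mul (2 * C * S / L)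
    exact h4.congr_deriv (by rw [mul_comm (Real.exp (L * s)) L, ← mul_assoc, div_mul_cancel₀ _ hLpos.ne'])
  -- |f i t| ≤ φ t for all i, t
  have hkey : ∀ i, ∀ t ∈ Set.Icc 0 T, |f i t| ≤ φ t := by
    intro i t ht
    have hφ0 : φ 0 = 0 := by simp [hφ]
    rw [abs_le]
    constructor
    · -- -φ t ≤ f i t, i.e. φ + f monotone
      have hm : MonotoneOn (fun s => φ s + f i s) (Set.Icc 0 T) := by
        apply mono_aux (h' := fun s => 2 * C * S * Real.exp (L * s) + f' i s)
        · intro s hs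
          exact (hφderiv s).add (hderiv i s hs)
        · intro s hs
          have := hf'bound i s hs
          have := neg_abs_le (f' i s)
          linarith
      have := hm h0T ht ht.1
      simp only [hφ0, hinit, add_zero, zero_add] at this
      linarith
    · have hm : MonotoneOn (fun s => φ s - f i s) (Set.Icc 0 T) := by
        apply mono_aux (h' := fun s => 2 * C * S * Real.exp (L * s) - f' i s)
        · intro s hs
          exact (hφderiv s).sub (hderiv i s hs)
        · intro s hs
          have := hf'bound i s hs
          have := le_abs_self (f' i s)
          linarith
      have := hm h0T ht ht.1
      simp only [hφ0, hinit, sub_zero, zero_sub] at this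
      linarith
  -- conclude S ≤ (2C/L) S
  have hSle : S ≤ (2 * C / L) * S := by
    apply csSup_le hAne
    intro x hx
    obtain ⟨i, t, ht, rfl⟩ := hx
    have h1 := hkey i t ht
    have h2 : 0 < Real.exp (-L * t) := Real.exp_pos _
    have h3 : |f i t| * Real.exp (-L * t) ≤ φ t * Real.exp (-L * t) :=
      mul_le_mul_of_nonneg_right h1 h2.le
    refine h3.trans ?_
    have h4 : φ t * Real.exp (-L * t)
        = (2 * C * S / L) * (1 - Real.exp (-L * t)) := by
      simp only [hφ]
      rw [mul_assoc, sub_mul, ← Real.exp_add, show L * t + -L * t = 0 by ring, Real.exp_zero]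
      ring
    rw [h4]
    have h5 : 1 - Real.exp (-L * t) ≤ 1 := by
      have := (Real.exp_pos (-L * t)).le
      linarith
    have h6 : 0 ≤ 2 * C * S / L := by positivity
    calc (2 * C * S / L) * (1 - Real.exp (-L * t)) ≤ (2 * C * S / L) * 1 :=
          mul_le_mul_of_nonneg_left h5 h6
      _ = (2 * C / L) * S := by ring
  have hSzero : S = 0 := by
    have hfrac : 2 * C / L < 1 := by
      rw [div_lt_one hLpos]
      linarith
    nlinarith
  intro i t ht
  have h1 := hkey i t ht
  have : φ t = 0 := by simp [hφ, hSzero]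
  rw [this] at h1
  exact abs_eq_zero.mp (le_antisymm h1 (abs_nonneg _))
end
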